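/- Let φ : ℝ → ℝ be continuous with φ(s) ≥ c > 0 for all s. Then the initial value problem α′(t) = φ(α(t)) for t > 0, α(0) = 0, has at most one solution α ∈ C([0,∞)) ∩ C¹((0,∞)); namely any solution satisfies ψ(α(t)) = t where ψ(r) = ∫₀^r ds/φ(s). -/

import Mathlib

/-!
Along a solution of `α' = φ(α)`, the primitive `ψ` of `1/φ` satisfies
`(ψ ∘ α)' = φ(α)⁻¹ · φ(α) = 1`, so by the mean value theorem `ψ (α t) - ψ (α 0) = t`.
Since `ψ' = 1/φ > 0`, `ψ` is injective and `α t` is determined by `t`.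
-/

open Set intervalIntegral

theorem comp_sub_comp_eq_sub_of_hasDerivAt_inv {φ ψ α : ℝ → ℝ} {a b : ℝ} (hab : a ≤ b)
    (hφ : ∀ r, φ r ≠ 0) (hψ : ∀ r, HasDerivAt ψ (φ r)⁻¹ r)
    (hαc : ContinuousOn α (Icc a b)) (hα : ∀ t ∈ Ioo a b, HasDerivAt α (φ (α t)) t) :
    ψ (α b) - ψ (α a) = b - a := by
  rcases hab.eq_or_lt with rfl | hab
  · simp
  have hψα : ∀ t ∈ Ioo a b, HasDerivAt (ψ ∘ α) 1 t := fun t ht => by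
    simpa only [inv_mul_cancel₀ (hφ (α t))] using (hψ (α t)).comp t (hα t ht)
  have hψαc : ContinuousOn (ψ ∘ α) (Icc a b) :=
    (continuous_iff_continuousAt.2 fun r => (hψ r).continuousAt).comp_continuousOn hαc
  obtain ⟨_, _, hslope⟩ := exists_hasDerivAt_eq_slope (ψ ∘ α) (fun _ => 1) hab hψαc hψα
  rw [eq_div_iff (sub_pos.2 hab).ne', one_mul] at hslope
  exact hslope.symm

/-- uniqueness for `α′ = φ(α)`, `α(0) = 0` with `φ ≥ c > 0`:
any solution satisfies `ψ (α t) = t`, hence there is at most one solution. -/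
theorem stmt4 (φ : ℝ → ℝ) (c : ℝ) (hc : 0 < c) (hφ : Continuous φ)
    (hφc : ∀ s, c ≤ φ s)
    (ψ : ℝ → ℝ) (hψ : ∀ r, ψ r = ∫ s in (0:ℝ)..r, 1 / φ s) :
    (∀ α : ℝ → ℝ, ContinuousOn α (Ici 0) → α 0 = 0 →
      (∀ t > (0:ℝ), HasDerivAt α (φ (α t)) t) →
      ∀ t ≥ (0:ℝ), ψ (α t) = t) ∧
    (∀ α β : ℝ → ℝ, ContinuousOn α (Ici 0) → α 0 = 0 →
      (∀ t > (0:ℝ), HasDerivAt α (φ (α t)) t) →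
      ContinuousOn β (Ici 0) → β 0 = 0 →
      (∀ t > (0:ℝ), HasDerivAt β (φ (β t)) t) →
      ∀ t ≥ (0:ℝ), α t = β t) := by
  have hφ0 : ∀ s, 0 < φ s := fun s => hc.trans_le (hφc s)
  have hψ' : ∀ r, HasDerivAt ψ (φ r)⁻¹ r := fun r => by
    rw [show ψ = fun r => ∫ s in (0:ℝ)..r, (φ s)⁻¹ from funext fun r => by simp [hψ]]
    exact ((hφ.inv₀ fun s => (hφ0 s).ne').integral_hasStrictDerivAt 0 r).hasDerivAt
  have hψ0 : ψ 0 = 0 := by simp [hψ]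
  have orbit : ∀ α : ℝ → ℝ, ContinuousOn α (Ici 0) → α 0 = 0 →
      (∀ t > (0:ℝ), HasDerivAt α (φ (α t)) t) → ∀ t ≥ (0:ℝ), ψ (α t) = t := by
    intro α hαc hα0 hα t ht
    have := comp_sub_comp_eq_sub_of_hasDerivAt_inv ht (fun s => (hφ0 s).ne') hψ'
      (hαc.mono Icc_subset_Ici_self) fun s hs => hα s hs.1
    rwa [hα0, hψ0, sub_zero, sub_zero] at this
  refine ⟨orbit, fun α β hαc hα0 hα hβc hβ0 hβ t ht => ?_⟩
  have hψ_inj := (strictMono_of_hasDerivAt_pos hψ' fun r => inv_pos.2 (hφ0 r)).injective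
  exact hψ_inj ((orbit α hαc hα0 hα t ht).trans (orbit β hβc hβ0 hβ t ht).symm)
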